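/- Let K be a field and M an m×m matrix over K[x_1,...,x_n] with m ≥ 1. If M is strongly nilpotent with index r (i.e., r is minimal such that M|_{x=y⁽ʳ⁾}···M|_{x=y⁽¹⁾} = 0 for fresh indeterminate tuples y⁽ⁱ⁾), then r ≤ m. -/

import Mathlib

/-!
Specialising the fresh tuples turns `M|_{x=y⁽ʳ⁾} ⋯ M|_{x=y⁽¹⁾} = 0` into the vanishing of every
product of length `r` of the matrices `Aᵢ = M|_{x=y⁽ⁱ⁾}`, viewed over the fraction field `L` of
`K[y]`. For any family of endomorphisms `fᵢ` of a finite-dimensional space `V` put `W₀ = V` and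
`W_{j+1} = Σᵢ fᵢ(W_j)`. This chain descends, and once two consecutive terms agree it is constant.
If all products of length `r` vanish it reaches `0`, so it must drop strictly at every step until it
does, and therefore already all products of length `dim V = m` vanish. Minimality of `r` then
gives `r ≤ m`.
-/

open MvPolynomial

/-- Substitute the `i`-th fresh tuple of indeterminates for `x` in every entry of `M`. -/
noncomputable def substN {K : Type} [CommRing K] {n m : ℕ}
    (M : Matrix (Fin m) (Fin m) (MvPolynomial (Fin n) K)) (i : ℕ) :
    Matrix (Fin m) (Fin m) (MvPolynomial (ℕ × Fin n) K) :=
  M.map (rename fun k => (i, k))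

/-- The product `M|_{x=y⁽ʳ⁾} ⬝ ⋯ ⬝ M|_{x=y⁽¹⁾}` (fresh tuples indexed `r-1, …, 0`). -/
noncomputable def prodSubst {K : Type} [CommRing K] {n m : ℕ}
    (M : Matrix (Fin m) (Fin m) (MvPolynomial (Fin n) K)) (r : ℕ) :
    Matrix (Fin m) (Fin m) (MvPolynomial (ℕ × Fin n) K) :=
  ((List.range r).reverse.map (substN M)).prod

namespace Module.End

variable {L V ι : Type*} [Field L] [AddCommGroup V] [Module L V] (f : ι → Module.End L V)

def prodChain : ℕ → Submodule L V
  | 0 => ⊤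
  | j + 1 => ⨆ i, (prodChain j).map (f i)

theorem prodChain_succ_le (j : ℕ) : prodChain f (j + 1) ≤ prodChain f j := by
  induction j with
  | zero => exact le_top
  | succ j ih => exact iSup_mono fun i => Submodule.map_mono ih

theorem prodChain_antitone : Antitone (prodChain f) :=
  antitone_nat_of_succ_le (prodChain_succ_le f)

theorem prodChain_succ_succ_eq {j : ℕ} (h : prodChain f (j + 1) = prodChain f j) :
    prodChain f (j + 2) = prodChain f (j + 1) := by
  change ⨆ i, (prodChain f (j + 1)).map (f i) = ⨆ i, (prodChain f j).map (f i)
  rw [h]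

theorem prodChain_eq_of_succ_eq {j : ℕ} (h : prodChain f (j + 1) = prodChain f j) {k : ℕ}
    (hjk : j ≤ k) : prodChain f k = prodChain f j := by
  have hstep : ∀ k, j ≤ k → prodChain f (k + 1) = prodChain f k :=
    Nat.le_induction h fun k _ ih => prodChain_succ_succ_eq f ih
  induction k, hjk using Nat.le_induction with
  | base => rfl
  | succ k hjk ih => rw [hstep k hjk, ih]

theorem range_list_prod_le_prodChain (l : List ι) :
    LinearMap.range (l.map f).prod ≤ prodChain f l.length := by
  induction l with
  | nil => exact le_top
  | cons a l ih =>
    rw [List.map_cons, List.prod_cons, mul_eq_comp, LinearMap.range_comp]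
    exact le_iSup_of_le a (Submodule.map_mono ih)

theorem prodChain_le_iSup_range (j : ℕ) :
    prodChain f j ≤ ⨆ l : {l : List ι // l.length = j}, LinearMap.range (l.1.map f).prod := by
  induction j with
  | zero => exact le_iSup_of_le ⟨[], rfl⟩ (by simp [one_eq_id])
  | succ j ih =>
    refine iSup_le fun i => (Submodule.map_mono ih).trans ?_
    rw [Submodule.map_iSup]
    refine iSup_le fun l => le_iSup_of_le ⟨i :: l.1, by simp [l.2]⟩ ?_
    rw [List.map_cons, List.prod_cons, mul_eq_comp, LinearMap.range_comp]

theorem prodChain_eq_bot {r : ℕ} (h : ∀ l : List ι, l.length = r → (l.map f).prod = 0) :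
    prodChain f r = ⊥ :=
  eq_bot_iff.2 <| (prodChain_le_iSup_range f r).trans <|
    iSup_le fun l => by rw [h l.1 l.2, LinearMap.range_zero]

variable [FiniteDimensional L V]

/-- Until the chain reaches `⊥` it cannot stall, so each step lowers its dimension. -/
theorem finrank_prodChain_le {r : ℕ} (hr : prodChain f r = ⊥) (j : ℕ) :
    finrank L (prodChain f j) ≤ finrank L V - j := by
  induction j with
  | zero => exact Submodule.finrank_le _
  | succ j ih =>
    rcases (prodChain_succ_le f j).lt_or_eq with hlt | heq
    · have := Submodule.finrank_lt_finrank_of_lt hlt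
      omega
    · have hbot : prodChain f (j + 1) = ⊥ := by
        rw [heq, ← prodChain_eq_of_succ_eq f heq (le_max_left j r)]
        exact eq_bot_iff.2 (hr ▸ prodChain_antitone f (le_max_right j r))
      rw [hbot, finrank_bot]
      exact Nat.zero_le _

theorem list_prod_eq_zero_of_finrank_le_length {r : ℕ}
    (h : ∀ l : List ι, l.length = r → (l.map f).prod = 0) (l : List ι)
    (hl : finrank L V ≤ l.length) : (l.map f).prod = 0 := by
  have hbot : prodChain f (finrank L V) = ⊥ := by
    have := finrank_prodChain_le f (prodChain_eq_bot f h) (finrank L V)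
    rwa [Nat.sub_self, Nat.le_zero, Submodule.finrank_eq_zero] at this
  rw [← LinearMap.range_eq_bot, eq_bot_iff]
  exact (range_list_prod_le_prodChain f l).trans (hbot ▸ prodChain_antitone f hl)

end Module.End

theorem Matrix.list_prod_eq_zero_of_card_le_length {L ι n : Type*} [Field L] [Fintype n]
    [DecidableEq n] (A : ι → Matrix n n L) {r : ℕ}
    (h : ∀ l : List ι, l.length = r → (l.map A).prod = 0) (l : List ι)
    (hl : Fintype.card n ≤ l.length) :
    (l.map A).prod = 0 := by
  have hmap : ∀ l : List ι, (l.map A).prod.toLin' = (l.map (toLin' ∘ A)).prod := fun l => by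
    rw [← List.map_map]
    exact map_list_prod toLinAlgEquiv' _
  apply toLin'.injective
  rw [hmap, LinearEquiv.map_zero]
  refine Module.End.list_prod_eq_zero_of_finrank_le_length _ (r := r) (fun l hl => ?_) l
    (by simpa using hl)
  rw [← hmap, h l hl, LinearEquiv.map_zero]

section FreshTuples

variable {K : Type} [CommRing K] {m n : ℕ} (M : Matrix (Fin m) (Fin m) (MvPolynomial (Fin n) K))

theorem substN_map_rename (g : ℕ → ℕ) (i : ℕ) :
    (substN M i).map (rename (Prod.map g id)) = substN M (g i) := by
  simp only [substN, Matrix.map_map]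
  congr 1
  ext p
  simp [rename_rename, Function.comp_def]

theorem list_prod_substN_map_rename (g : ℕ → ℕ) (l : List ℕ) :
    ((l.map (substN M)).prod).map (rename (Prod.map g id)) = ((l.map g).map (substN M)).prod := by
  change (rename (Prod.map g id)).toRingHom.mapMatrix _ = _
  rw [map_list_prod, List.map_map, List.map_map]
  exact congrArg List.prod (List.map_congr_left fun i _ => substN_map_rename M g i)

/-- The product over fresh tuples specialises, by renaming variables, to every product of length
`r`, repetitions allowed. -/
theorem list_prod_substN_eq_zero {r : ℕ} (h0 : prodSubst M r = 0) (l : List ℕ)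
    (hl : l.length = r) : (l.map (substN M)).prod = 0 := by
  have hl' : (List.range r).reverse.map (fun j => l.getD (r - 1 - j) 0) = l := by
    refine List.ext_getElem (by simp [hl]) fun k h₁ h₂ => ?_
    simp only [List.getElem_map, List.getElem_reverse, List.getElem_range, List.length_range]
    rw [List.getD_eq_getElem _ _ (by omega)]
    simp only [List.length_map, List.length_reverse, List.length_range] at h₁
    congr 1
    omega
  rw [← hl', ← list_prod_substN_map_rename, ← prodSubst, h0, Matrix.map_zero _ (map_zero _)]

end FreshTuples

theorem stmt1 {K : Type} [Field K] {m n : ℕ}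
    (M : Matrix (Fin m) (Fin m) (MvPolynomial (Fin n) K)) (r : ℕ)
    (h0 : prodSubst M r = 0)
    (hmin : ∀ r' < r, prodSubst M r' ≠ 0) :
    r ≤ m := by
  by_contra! hlt
  apply hmin m hlt
  let φ := algebraMap (MvPolynomial (ℕ × Fin n) K) (FractionRing (MvPolynomial (ℕ × Fin n) K))
  have hφ : ∀ l : List ℕ, (l.map fun i => (substN M i).map φ).prod
      = ((l.map (substN M)).prod).map φ := fun l => by
    rw [← RingHom.mapMatrix_apply, map_list_prod, List.map_map]
    rfl
  have hzero := Matrix.list_prod_eq_zero_of_card_le_length (fun i => (substN M i).map φ) (r := r)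
    (fun l hl => by rw [hφ, list_prod_substN_eq_zero M h0 l hl, Matrix.map_zero _ (map_zero φ)])
    (List.range m).reverse (by simp)
  rw [hφ, ← prodSubst, ← Matrix.map_zero _ (map_zero φ)] at hzero
  exact Matrix.map_injective (IsFractionRing.injective _ _) hzero
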